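/- arXiv:1701.00350 — 6 statements merged into one kernel-verified Lean document; each statement's English description precedes it below -/
import Mathlib

section
/- Let T be a tree on vertex set [n] and S ⊆ [n] such that the induced subgraph of T on S has more than one connected component. Then there exists a vertex x ∉ S such that for every a ∈ S there is some b ∈ S with x lying on the unique path in T between a and b. -/
/-- `x` lies on the (unique) path in `G` between `a` and `b`. -/
def onPath {V : Type*} (G : SimpleGraph V) (a x b : V) : Prop :=
  ∀ p : G.Walk a b, p.IsPath → x ∈ p.support

lemma lift_reachable {n : ℕ} (T : SimpleGraph (Fin n)) (S : Set (Fin n)) :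
    ∀ {a b : Fin n} (p : T.Walk a b) (h : ∀ v ∈ p.support, v ∈ S),
      (T.induce S).Reachable ⟨a, h a p.start_mem_support⟩ ⟨b, h b p.end_mem_support⟩ := by
  intro a b p
  induction p with
  | nil => intro h; exact SimpleGraph.Reachable.refl _
  | @cons u v w hadj q ih =>
    intro h
    have h' : ∀ z ∈ q.support, z ∈ S := fun z hz => h z (by simp [hz])
    refine SimpleGraph.Reachable.trans ?_ (ih h')
    exact SimpleGraph.Adj.reachable (hadj :
      (T.induce S).Adj ⟨u, h u (SimpleGraph.Walk.cons hadj q).start_mem_support⟩ ⟨v, h' v q.start_mem_support⟩)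

/-- In a tree, a vertex on the unique path between `a` and `b` lies on every walk
from `a` to `b`. -/
lemma mem_every_walk {n : ℕ} {T : SimpleGraph (Fin n)} (hT : T.IsTree)
    {a b x : Fin n} {p : T.Walk a b} (hp : p.IsPath) (hx : x ∈ p.support)
    (w : T.Walk a b) : x ∈ w.support := by
  have huniq := hT.existsUnique_path a b
  have hbp : w.bypass = p := huniq.unique w.bypass_isPath hp
  have := w.support_bypass_subset
  rw [hbp] at this
  exact this hx

theorem stmt_2 {n : ℕ} (T : SimpleGraph (Fin n)) (hT : T.IsTree)
    (S : Set (Fin n))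
    (hcc : ∃ c d : (T.induce S).ConnectedComponent, c ≠ d) :
    ∃ x, x ∉ S ∧ ∀ a ∈ S, ∃ b ∈ S, onPath T a x b := by
  obtain ⟨c, d, hcd⟩ := hcc
  obtain ⟨⟨a, ha⟩, rfl⟩ := c.exists_rep
  obtain ⟨⟨b, hb⟩, rfl⟩ := d.exists_rep
  obtain ⟨p, hp, hpuniq⟩ := hT.existsUnique_path a b
  -- p must contain a vertex not in S
  have hnotall : ¬ ∀ v ∈ p.support, v ∈ S := by
    intro hall
    exact hcd (SimpleGraph.ConnectedComponent.sound (lift_reachable T S p hall))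
  push_neg at hnotall
  obtain ⟨x, hxp, hxS⟩ := hnotall
  refine ⟨x, hxS, ?_⟩
  intro a' ha'
  by_cases hcase : onPath T a' x a
  · exact ⟨a, ha, hcase⟩
  · refine ⟨b, hb, ?_⟩
    unfold onPath at hcase
    push_neg at hcase
    obtain ⟨q, hq, hxq⟩ := hcase
    intro r hr
    by_contra hxr
    have hmem : x ∈ (q.reverse.append r).support :=
      mem_every_walk hT hp hxp (q.reverse.append r)
    rw [SimpleGraph.Walk.mem_support_append_iff] at hmem
    rcases hmem with h1 | h2
    · exact hxq (by simpa using h1)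
    · exact hxr h2
end

section
/- Let S ⊆ [n], let T and T' be trees on vertex set [n], and let x ∉ S. Suppose S is connected in T' (the induced subgraph of T' on S is connected), and suppose there exist a, b ∈ S such that x lies on the unique T-path between a and b. Then there exist a', b' ∈ S such that {a', b'} is an edge of T' and x lies on the unique T-path between a' and b'. -/
private lemma onPath_step {V : Type*} (T : SimpleGraph V) {a c b x : V}
    (hab : onPath T a x b) (hac : ¬ onPath T a x c) : onPath T c x b := by
  classical
  unfold onPath at hac
  push_neg at hac
  obtain ⟨p, hp, hxp⟩ := hac
  by_contra hcb
  unfold onPath at hcb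
  push_neg at hcb
  obtain ⟨q, hq, hxq⟩ := hcb
  have hpath := (p.append q).bypass_isPath
  have hx := hab (p.append q).bypass hpath
  have hsub := SimpleGraph.Walk.support_bypass_subset (p.append q)
  have := hsub hx
  rw [SimpleGraph.Walk.support_append] at this
  rcases List.mem_append.mp this with h | h
  · exact hxp h
  · exact hxq (List.mem_of_mem_tail h)

private lemma aux_walk {n : ℕ} (T T' : SimpleGraph (Fin n)) (S : Set (Fin n))
    (x : Fin n) (hx : x ∉ S) :
    ∀ {a b : S} (_ : (T'.induce S).Walk a b), onPath T a x b →
      ∃ a' ∈ S, ∃ b' ∈ S, T'.Adj a' b' ∧ onPath T a' x b' := by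
  intro a b w
  induction w with
  | nil =>
    intro h
    have hx' := h SimpleGraph.Walk.nil SimpleGraph.Walk.IsPath.nil
    simp only [SimpleGraph.Walk.support_nil, List.mem_singleton] at hx'
    exact absurd (hx' ▸ Subtype.coe_prop _) hx
  | @cons u v w' hadj p ih =>
    intro hab
    by_cases hac : onPath T u x v
    · exact ⟨u, u.2, v, v.2, hadj, hac⟩
    · exact ih (onPath_step T hab hac)

theorem stmt_3 {n : ℕ} (T T' : SimpleGraph (Fin n))
    (hT : T.IsTree) (hT' : T'.IsTree)
    (S : Set (Fin n)) (x : Fin n) (hx : x ∉ S)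
    (hconn : (T'.induce S).Connected)
    (hwit : ∃ a ∈ S, ∃ b ∈ S, onPath T a x b) :
    ∃ a' ∈ S, ∃ b' ∈ S, T'.Adj a' b' ∧ onPath T a' x b' := by
  obtain ⟨a, ha, b, hb, hab⟩ := hwit
  obtain ⟨w⟩ := hconn ⟨a, ha⟩ ⟨b, hb⟩
  exact aux_walk T T' S x hx w hab
end

section
/- Let (S_1, T_1), ..., (S_r, T_r) be pairs where each S_i ⊆ [n] with |S_i| > 1 and each T_i is a spanning tree of the complete graph on [n]. Define f(S, T) = 0 if the induced subgraph of T on S is connected, and f(S, T) = 1 otherwise. Suppose the family is a fooling set: f(S_j, T_j) = 1 for all j, and for all i ≠ j, f(S_i, T_j) · f(S_j, T_i) = 0. Then r ≤ n²(n-1) + n(n-1)/2 (in particular r = O(n²)). -/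
/-!
If `T` is a tree and `T[S]` is disconnected, two vertices `a ≠ b` of `S` lie in different
components of `T[S]`, so the unique `a`–`b` path of `T` leaves `S` at some vertex `y`, and every
`a`–`b` walk passes through `y`. Attach the triple `(a_j, b_j, y_j)` to the `j`-th pair. If two
pairs `i ≠ j` had the same triple, then neither `T_j[S_i]` nor `T_i[S_j]` would be connected,
since `y ∉ S_i, S_j` separates `a, b ∈ S_i ∩ S_j` in both trees. Hence `r` is at most the number
of such triples, `n (n - 1) n`.
-/

namespace SimpleGraph

variable {V : Type*} {G : SimpleGraph V}

def Separates (G : SimpleGraph V) (y a b : V) : Prop :=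
  ∀ w : G.Walk a b, y ∈ w.support

lemma IsAcyclic.separates_of_mem_support_path (hG : G.IsAcyclic) {a b y : V} (p : G.Path a b)
    (hy : y ∈ (p : G.Walk a b).support) : G.Separates y a b := by
  classical
  intro w
  exact w.support_toPath_subset_support ((hG.subsingleton_path a b).elim w.toPath p ▸ hy)

lemma Separates.not_reachable_induce {S : Set V} {a b y : V} (hsep : G.Separates y a b)
    (ha : a ∈ S) (hb : b ∈ S) (hy : y ∉ S) : ¬ (G.induce S).Reachable ⟨a, ha⟩ ⟨b, hb⟩ := by
  rintro ⟨w⟩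
  obtain ⟨z, -, rfl⟩ := List.mem_map.mp <|
    (Walk.support_map _ w) ▸ hsep (w.map (Embedding.induce S).toHom)
  exact hy z.2

lemma Separates.not_connected_induce {S : Set V} {a b y : V} (hsep : G.Separates y a b)
    (ha : a ∈ S) (hb : b ∈ S) (hy : y ∉ S) : ¬ (G.induce S).Connected := fun h =>
  hsep.not_reachable_induce ha hb hy (h.preconnected _ _)

lemma IsTree.exists_separates_of_not_connected_induce (hG : G.IsTree) {S : Set V}
    (hS : S.Nonempty) (hdisc : ¬ (G.induce S).Connected) :
    ∃ a ∈ S, ∃ b ∈ S, a ≠ b ∧ ∃ y ∉ S, G.Separates y a b := by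
  classical
  have : Nonempty S := hS.to_subtype
  obtain ⟨⟨a, ha⟩, ⟨b, hb⟩, hab⟩ : ∃ a b : S, ¬ (G.induce S).Reachable a b := by
    by_contra! h
    exact hdisc ⟨h⟩
  have hne : a ≠ b := by
    rintro rfl
    exact hab (Reachable.refl _)
  let p : G.Path a b := (hG.connected.preconnected a b).some.toPath
  obtain ⟨y, hyp, hyS⟩ : ∃ y ∈ (p : G.Walk a b).support, y ∉ S := by
    by_contra! hsub
    exact hab ⟨(p : G.Walk a b).induce S hsub⟩
  exact ⟨a, ha, b, hb, hne, y, hyS, hG.isAcyclic.separates_of_mem_support_path p hyp⟩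

end SimpleGraph

open SimpleGraph

theorem stmt_5 {n r : ℕ} (S : Fin r → Set (Fin n))
    (T : Fin r → SimpleGraph (Fin n))
    (hT : ∀ i, (T i).IsTree) (hS : ∀ i, 1 < (S i).ncard)
    (hdiag : ∀ j, ¬ ((T j).induce (S j)).Connected)
    (hoff : ∀ i j, i ≠ j →
      ((T j).induce (S i)).Connected ∨ ((T i).induce (S j)).Connected) :
    r ≤ n ^ 2 * (n - 1) + n * (n - 1) / 2 := by
  choose a haS b hbS hab y hyS hsep using fun j =>
    (hT j).exists_separates_of_not_connected_induce
      (Set.nonempty_of_ncard_ne_zero (zero_lt_one.trans (hS j)).ne') (hdiag j)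
  let triple : Fin r → (Fin n × Fin n) × Fin n := fun j => ((a j, b j), y j)
  have htriple_inj : Function.Injective triple := by
    intro i j hij
    simp only [triple, Prod.mk.injEq] at hij
    obtain ⟨⟨heq_a, heq_b⟩, heq_y⟩ := hij
    by_contra hne
    rcases hoff i j hne with hc | hc
    · exact (hsep j).not_connected_induce (heq_a ▸ haS i) (heq_b ▸ hbS i) (heq_y ▸ hyS i) hc
    · exact (hsep i).not_connected_induce (heq_a ▸ haS j) (heq_b ▸ hbS j) (heq_y ▸ hyS j) hc
  have hmaps : ∀ j ∈ (Finset.univ : Finset (Fin r)),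
      triple j ∈ (Finset.univ : Finset (Fin n)).offDiag ×ˢ Finset.univ := fun j _ => by
    simp [triple, hab j]
  have hcard := Finset.card_le_card_of_injOn triple hmaps htriple_inj.injOn
  simp only [Finset.card_univ, Fintype.card_fin, Finset.card_product, Finset.offDiag_card,
    ← Nat.mul_sub_one] at hcard
  calc r ≤ n * (n - 1) * n := hcard
    _ = n ^ 2 * (n - 1) := by ring
    _ ≤ _ := Nat.le_add_right _ _
end

section
/- Let (S_1, T_1), ..., (S_r, T_r) be a fooling set for the function f(S,T) ∈ {0,1} defined by f(S,T) = 0 iff the induced subgraph of T on S is connected (where S ⊆ [n], |S| > 1, T a tree on [n]). Suppose (a, x, b) is a witness for f(S_i, T_i) = 1 and also a witness for f(S_j, T_j) = 1, meaning a, b ∈ S_i, x ∉ S_i, x on the T_i-path from a to b, and the same with i replaced by j. Then i = j. -/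
open SimpleGraph

lemma mem_of_onPath_of_induce_connected {V : Type*} {G : SimpleGraph V} {S : Set V}
    (hS : (G.induce S).Connected) {a x b : V} (ha : a ∈ S) (hb : b ∈ S)
    (hx : onPath G a x b) : x ∈ S := by
  classical
  obtain ⟨w⟩ := hS ⟨a, ha⟩ ⟨b, hb⟩
  have hxp : x ∈ (w.map (Embedding.induce S).toHom).support :=
    Walk.support_bypass_subset_support _ (hx _ (Walk.bypass_isPath _))
  rw [Walk.support_map, List.mem_map] at hxp
  obtain ⟨y, -, rfl⟩ := hxp
  exact y.2

theorem stmt_6_general {n r : ℕ} (S : Fin r → Set (Fin n))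
    (T : Fin r → SimpleGraph (Fin n))
    (hoff : ∀ i j, i ≠ j →
      ((T j).induce (S i)).Connected ∨ ((T i).induce (S j)).Connected)
    (i j : Fin r) (a x b : Fin n)
    (hai : a ∈ S i) (hbi : b ∈ S i) (hxi : x ∉ S i)
    (hwi : onPath (T i) a x b)
    (haj : a ∈ S j) (hbj : b ∈ S j) (hxj : x ∉ S j)
    (hwj : onPath (T j) a x b) :
    i = j := by
  by_contra hij
  rcases hoff i j hij with hc | hc
  · exact hxi (mem_of_onPath_of_induce_connected hc hai hbi hwj)
  · exact hxj (mem_of_onPath_of_induce_connected hc haj hbj hwi)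

theorem stmt_6 {n r : ℕ} (S : Fin r → Set (Fin n))
    (T : Fin r → SimpleGraph (Fin n))
    (hT : ∀ i, (T i).IsTree) (hS : ∀ i, 1 < (S i).ncard)
    (hdiag : ∀ j, ¬ ((T j).induce (S j)).Connected)
    (hoff : ∀ i j, i ≠ j →
      ((T j).induce (S i)).Connected ∨ ((T i).induce (S j)).Connected)
    (i j : Fin r) (a x b : Fin n)
    (hai : a ∈ S i) (hbi : b ∈ S i) (hxi : x ∉ S i)
    (hwi : onPath (T i) a x b)
    (haj : a ∈ S j) (hbj : b ∈ S j) (hxj : x ∉ S j)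
    (hwj : onPath (T j) a x b) :
    i = j :=
  stmt_6_general S T hoff i j a x b hai hbi hxi hwi haj hbj hxj hwj
end

section
/- Fix a fooling set (S_1, T_1), ..., (S_r, T_r) for the connectivity function f (f(S,T)=0 iff the induced subgraph of T on S is connected), where each S_i ⊆ [n], |S_i| > 1, and each T_i is a tree on [n]. Fix x ∈ [n] and k ∈ [r], and let Z_{x,k} be the set of indices i ∈ [r] such that (1) S_i is connected in T_k, and (2) there exist a, b ∈ S_i with (a,x,b) a witness for f(S_i, T_i) = 1. Then |Z_{x,k}| ≤ n - 1. -/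
namespace SimpleGraph

variable {V : Type*} {G : SimpleGraph V} {a b c x : V}

lemma not_onPath_of_walk (w : G.Walk a b) (hx : x ∉ w.support) : ¬ onPath G a x b := by
  classical
  exact fun h ↦ hx (w.support_bypass_subset_support (h _ w.bypass_isPath))

lemma not_onPath_self (hax : a ≠ x) : ¬ onPath G a x a :=
  not_onPath_of_walk .nil (by simpa using hax.symm)

lemma not_onPath_trans (hab : ¬ onPath G a x b) (hbc : ¬ onPath G b x c) :
    ¬ onPath G a x c := by
  obtain ⟨p, -, hp⟩ : ∃ p : G.Walk a b, p.IsPath ∧ x ∉ p.support := by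
    simpa [onPath] using hab
  obtain ⟨q, -, hq⟩ : ∃ q : G.Walk b c, q.IsPath ∧ x ∉ q.support := by
    simpa [onPath] using hbc
  exact not_onPath_of_walk (p.append q) (by simp [Walk.mem_support_append_iff, hp, hq])

lemma not_onPath_of_connected_induce {s : Set V} (hs : (G.induce s).Connected) (hx : x ∉ s)
    (ha : a ∈ s) (hb : b ∈ s) : ¬ onPath G a x b := by
  obtain ⟨w⟩ := hs.preconnected ⟨a, ha⟩ ⟨b, hb⟩
  let w' : G.Walk a b := w.map (Embedding.induce s).toHom
  refine not_onPath_of_walk w' fun h ↦ ?_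
  have h' : x ∈ w.support.map (↑) := (w.support_map (Embedding.induce s).toHom) ▸ h
  obtain ⟨v, -, rfl⟩ := List.mem_map.mp h'
  exact hx v.2

lemma exists_adj_onPath_of_connected_induce {H : SimpleGraph V} {s : Set V}
    (hs : (H.induce s).Connected) (hx : x ∉ s) (ha : a ∈ s) (hb : b ∈ s)
    (hab : onPath G a x b) : ∃ u v, H.Adj u v ∧ u ∈ s ∧ v ∈ s ∧ onPath G u x v := by
  obtain ⟨w⟩ := hs.preconnected ⟨a, ha⟩ ⟨b, hb⟩
  obtain ⟨d, -, hd₁, hd₂⟩ := w.exists_boundary_dart {z | ¬ onPath G a x z}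
    (not_onPath_self fun h ↦ hx (h ▸ ha)) (by simpa using hab)
  refine ⟨d.fst, d.snd, d.adj, d.fst.2, d.snd.2, ?_⟩
  by_contra h
  exact hd₂ (not_onPath_trans hd₁ h)

lemma IsTree.natCard_edgeSet_add_one [Finite V] (hG : G.IsTree) :
    Nat.card G.edgeSet + 1 = Nat.card V := by
  have := Fintype.ofFinite V
  classical
  rw [Nat.card_eq_fintype_card, Nat.card_eq_fintype_card, ← edgeFinset_card,
    hG.card_edgeFinset]

lemma natCard_le_natCard_edgeSet_of_onPath [Finite V] {ι : Type*} {Z : Set ι} (H : SimpleGraph V)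
    (G : ι → SimpleGraph V) (S : ι → Set V) (x : V)
    (hconn : ∀ i ∈ Z, (H.induce (S i)).Connected)
    (hsep : ∀ i ∈ Z, ∃ a ∈ S i, ∃ b ∈ S i, x ∉ S i ∧ onPath (G i) a x b)
    (hoff : ∀ i ∈ Z, ∀ j ∈ Z, i ≠ j →
      ((G j).induce (S i)).Connected ∨ ((G i).induce (S j)).Connected) :
    Nat.card Z ≤ Nat.card H.edgeSet := by
  have hx (i : Z) : x ∉ S i := by
    obtain ⟨-, -, -, -, hx, -⟩ := hsep i i.2
    exact hx
  have hedge (i : Z) : ∃ u v, H.Adj u v ∧ u ∈ S i ∧ v ∈ S i ∧ onPath (G i) u x v := by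
    obtain ⟨a, ha, b, hb, hx, hab⟩ := hsep i i.2
    exact exists_adj_onPath_of_connected_induce (hconn i i.2) hx ha hb hab
  choose u v hadj hu hv honPath using hedge
  have not_connected {i j : Z} (hij : s(u i, v i) = s(u j, v j)) :
      ¬ ((G j).induce (S i)).Connected := fun hc ↦ by
    have mem_S {y} (hy : y ∈ s(u j, v j)) : y ∈ S i := by
      rcases Sym2.mem_iff.mp (hij ▸ hy) with rfl | rfl
      exacts [hu i, hv i]
    exact not_onPath_of_connected_induce hc (hx i) (mem_S (Sym2.mem_mk_left _ _))
      (mem_S (Sym2.mem_mk_right _ _)) (honPath j)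
  refine Nat.card_le_card_of_injective (fun i ↦ ⟨s(u i, v i), hadj i⟩) fun i j hij ↦ ?_
  replace hij : s(u i, v i) = s(u j, v j) := congrArg Subtype.val hij
  by_contra hne
  rcases hoff i i.2 j j.2 (Subtype.coe_ne_coe.mpr hne) with hc | hc
  exacts [not_connected hij hc, not_connected hij.symm hc]

end SimpleGraph

theorem stmt_7_general {n r : ℕ} (S : Fin r → Set (Fin n))
    (T : Fin r → SimpleGraph (Fin n))
    (hT : ∀ i, (T i).IsTree)
    (hoff : ∀ i j, i ≠ j →
      ((T j).induce (S i)).Connected ∨ ((T i).induce (S j)).Connected)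
    (x : Fin n) (k : Fin r) :
    {i : Fin r | ((T k).induce (S i)).Connected ∧
      ∃ a ∈ S i, ∃ b ∈ S i, x ∉ S i ∧ onPath (T i) a x b}.ncard ≤ n - 1 := by
  have hedges := (hT k).natCard_edgeSet_add_one
  rw [Nat.card_fin] at hedges
  exact (SimpleGraph.natCard_le_natCard_edgeSet_of_onPath (T k) T S x (fun i hi ↦ hi.1)
    (fun i hi ↦ hi.2) fun i _ j _ ↦ hoff i j).trans_eq (by omega)

theorem stmt_7 {n r : ℕ} (S : Fin r → Set (Fin n))
    (T : Fin r → SimpleGraph (Fin n))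
    (hT : ∀ i, (T i).IsTree) (hS : ∀ i, 1 < (S i).ncard)
    (hdiag : ∀ j, ¬ ((T j).induce (S j)).Connected)
    (hoff : ∀ i j, i ≠ j →
      ((T j).induce (S i)).Connected ∨ ((T i).induce (S j)).Connected)
    (x : Fin n) (k : Fin r) :
    {i : Fin r | ((T k).induce (S i)).Connected ∧
      ∃ a ∈ S i, ∃ b ∈ S i, x ∉ S i ∧ onPath (T i) a x b}.ncard ≤ n - 1 :=
  stmt_7_general S T hT hoff x k
end

section
/- Fix a fooling set (S_1, T_1), ..., (S_r, T_r) for the connectivity function f (f(S,T)=0 iff the induced subgraph of T on S is connected) with S_i ⊆ [n], |S_i| > 1, T_i trees on [n]. Then for every fixed k ∈ [r], the number of indices i ∈ [r] with f(S_i, T_k) = 0 is at most n(n-1). -/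
/-!
For each `i` with `T k` connected on `S i`, the tree `T i` is not connected on `S i`, so some
edge `uv` of `T k` inside `S i` has its `T i`-path leaving `S i` at a vertex `w`. The pair
`(uv, w)` determines `i`: if `i ≠ j` shared it, every `T i`- and every `T j`-walk from `u` to `v`
would pass through `w ∉ S i ∪ S j`, so neither `T j` on `S i` nor `T i` on `S j` is connected,
against the fooling-set property. There are `n - 1` edges of `T k` and `n` choices of `w`.
-/

namespace SimpleGraph

variable {V : Type*} {G H : SimpleGraph V} {s : Set V}

theorem Preconnected.mem_of_forall_walk_mem_support (hs : (G.induce s).Preconnected)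
    {u v w : V} (hu : u ∈ s) (hv : v ∈ s) (hw : ∀ p : G.Walk u v, w ∈ p.support) : w ∈ s := by
  obtain ⟨p⟩ := hs ⟨u, hu⟩ ⟨v, hv⟩
  have := hw (p.map (Embedding.induce s).toHom)
  obtain ⟨x, -, rfl⟩ := List.mem_map.mp (Walk.support_map _ p ▸ this)
  exact x.2

theorem Preconnected.exists_adj_not_reachable (hH : H.Preconnected) (hG : ¬ G.Preconnected) :
    ∃ u v, H.Adj u v ∧ ¬ G.Reachable u v := by
  by_contra! h
  refine hG fun x y => ?_
  rw [reachable_iff_reflTransGen]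
  exact ((reachable_iff_reflTransGen x y).mp (hH x y)).lift' id
    fun a b hab => (reachable_iff_reflTransGen a b).mp (h a b hab)

theorem IsTree.exists_notMem_forall_walk_mem_support (hG : G.IsTree) {u v : V} (hu : u ∈ s)
    (hv : v ∈ s) (h : ¬ (G.induce s).Reachable ⟨u, hu⟩ ⟨v, hv⟩) :
    ∃ w ∉ s, ∀ p : G.Walk u v, w ∈ p.support := by
  classical
  obtain ⟨p₀, -, hp₀⟩ := hG.existsUnique_path u v
  obtain ⟨w, hw₀, hws⟩ : ∃ w ∈ p₀.support, w ∉ s := by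
    by_contra! hp₀s
    exact h ⟨p₀.induce s hp₀s⟩
  refine ⟨w, hws, fun p => p.support_bypass_subset_support ?_⟩
  rwa [hp₀ _ p.bypass_isPath]

theorem IsTree.exists_adj_forall_walk_mem_support (hG : G.IsTree)
    (hH : (H.induce s).Connected) (hGs : ¬ (G.induce s).Connected) :
    ∃ u v w, H.Adj u v ∧ u ∈ s ∧ v ∈ s ∧ w ∉ s ∧ ∀ p : G.Walk u v, w ∈ p.support := by
  have hGs' : ¬ (G.induce s).Preconnected := fun h => hGs ((connected_iff _).mpr ⟨h, hH.nonempty⟩)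
  obtain ⟨⟨u, hu⟩, ⟨v, hv⟩, huv, hnr⟩ := hH.preconnected.exists_adj_not_reachable hGs'
  obtain ⟨w, hws, hw⟩ := hG.exists_notMem_forall_walk_mem_support hu hv hnr
  exact ⟨u, v, w, by simpa using huv, hu, hv, hws, hw⟩

theorem not_preconnected_induce_of_sym2_eq {a b c d w : V} (h : s(a, b) = s(c, d))
    (ha : a ∈ s) (hb : b ∈ s) (hw : w ∉ s) (hcd : ∀ p : G.Walk c d, w ∈ p.support) :
    ¬ (G.induce s).Preconnected := by
  have hmem : ∀ x ∈ s(c, d), x ∈ s := by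
    rw [← h]
    intro x hx
    rcases Sym2.mem_iff.mp hx with rfl | rfl <;> assumption
  exact fun hs => hw (hs.mem_of_forall_walk_mem_support (hmem c (Sym2.mem_mk_left c d))
    (hmem d (Sym2.mem_mk_right c d)) hcd)

end SimpleGraph

open SimpleGraph

theorem stmt_8_general {n r : ℕ} (S : Fin r → Set (Fin n))
    (T : Fin r → SimpleGraph (Fin n))
    (hT : ∀ i, (T i).IsTree)
    (hdiag : ∀ j, ¬ ((T j).induce (S j)).Connected)
    (hoff : ∀ i j, i ≠ j →
      ((T j).induce (S i)).Connected ∨ ((T i).induce (S j)).Connected)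
    (k : Fin r) :
    {i : Fin r | ((T k).induce (S i)).Connected}.ncard ≤ n * (n - 1) := by
  set Z := {i : Fin r | ((T k).induce (S i)).Connected}
  choose u v w hadj hu hv hw hsep using fun i : Z =>
    (hT i).exists_adj_forall_walk_mem_support i.2 (hdiag i)
  let f : Z → (T k).edgeSet × Fin n := fun i => (⟨s(u i, v i), hadj i⟩, w i)
  have hf : f.Injective := by
    intro i j hij
    simp only [f, Prod.mk.injEq, Subtype.ext_iff] at hij
    obtain ⟨he, hwij⟩ := hij
    by_contra hne
    rcases hoff i j (Subtype.val_injective.ne hne) with hc | hc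
    · exact not_preconnected_induce_of_sym2_eq he (hu i) (hv i) (hw i) (hwij ▸ hsep j)
        hc.preconnected
    · exact not_preconnected_induce_of_sym2_eq he.symm (hu j) (hv j) (hwij ▸ hw j) (hsep i)
        hc.preconnected
  have hedges : Nat.card (T k).edgeSet = n - 1 := by
    have := (isTree_iff_connected_and_card.mp (hT k)).2
    rw [Nat.card_fin] at this
    omega
  calc Z.ncard = Nat.card Z := (Nat.card_coe_set_eq Z).symm
    _ ≤ Nat.card ((T k).edgeSet × Fin n) := Nat.card_le_card_of_injective f hf
    _ = n * (n - 1) := by rw [Nat.card_prod, hedges, Nat.card_fin, Nat.mul_comm]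

theorem stmt_8 {n r : ℕ} (S : Fin r → Set (Fin n))
    (T : Fin r → SimpleGraph (Fin n))
    (hT : ∀ i, (T i).IsTree) (hS : ∀ i, 1 < (S i).ncard)
    (hdiag : ∀ j, ¬ ((T j).induce (S j)).Connected)
    (hoff : ∀ i j, i ≠ j →
      ((T j).induce (S i)).Connected ∨ ((T i).induce (S j)).Connected)
    (k : Fin r) :
    {i : Fin r | ((T k).induce (S i)).Connected}.ncard ≤ n * (n - 1) :=
  stmt_8_general S T hT hdiag hoff k
end
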